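/- arXiv:2203.07411 — 4 statements merged into one kernel-verified Lean document; each statement's English description precedes it below -/
import Mathlib

section
/- Let D ≥ 1, σ₁, σ₂ > 0, and let x ∈ ℝ^D be a nonzero vector. Let Ω be a 2×D random matrix whose entries are i.i.d. N(0, σ₁²) and let W ∈ ℝ^{1×2} be a random row vector whose entries are i.i.d. N(0, σ₂²), with W independent of Ω. Then for every q ∈ ℝ, the characteristic function of f = W Ω x satisfies E[exp(i q f)] = 1/(1 + κ² q²), where κ = σ₁ σ₂ ‖x‖. -/
/-!
Conditionally on `W = w`, the output `∑ i, w i * ∑ j, M i j * x j` is a linear combination of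
the independent `N(0, σ₁²)` entries of `M`, hence a centred Gaussian of variance
`σ₁² ‖w‖² ‖x‖²`; its conditional characteristic function at `q` is
`exp (-c ‖w‖² / 2)` with `c = σ₁² q² ‖x‖²`. Averaging over `W`, each of its two independent
`N(0, σ₂²)` entries contributes the Gaussian integral `E[exp (-c Wᵢ² / 2)] = (1 + c σ₂²)^(-1/2)`,
and the two factors multiply to `1 / (1 + κ² q²)`.
-/

open MeasureTheory ProbabilityTheory Real Complex
open scoped NNReal

theorem ProbabilityTheory.IndepFun.integral_comp_eq_integral_integral {Ω α β E : Type*}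
    [MeasurableSpace Ω] [MeasurableSpace α] [MeasurableSpace β]
    [NormedAddCommGroup E] [NormedSpace ℝ E]
    {μ : Measure Ω} [IsFiniteMeasure μ] {X : Ω → α} {Y : Ω → β}
    (hXY : IndepFun X Y μ) (hX : AEMeasurable X μ) (hY : AEMeasurable Y μ) {H : α × β → E}
    (hH : StronglyMeasurable H) (hint : Integrable (fun ω ↦ H (X ω, Y ω)) μ) :
    ∫ ω, H (X ω, Y ω) ∂μ = ∫ ω, ∫ ω', H (X ω, Y ω') ∂μ ∂μ := by
  have hXY_law : μ.map (fun ω ↦ (X ω, Y ω)) = (μ.map X).prod (μ.map Y) :=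
    (indepFun_iff_map_prod_eq_prod_map_map hX hY).1 hXY
  have hmeas : AEMeasurable (fun ω ↦ (X ω, Y ω)) μ := hX.prodMk hY
  rw [← integral_map hmeas hH.aestronglyMeasurable, hXY_law,
    integral_prod H (by rwa [← hXY_law, integrable_map_measure hH.aestronglyMeasurable hmeas]),
    integral_map hX]
  · congr with a
    exact integral_map hY (hH.comp_measurable measurable_prodMk_left).aestronglyMeasurable
  · exact hH.integral_prod_right'.aestronglyMeasurable

theorem integral_cexp_sum_mul_I_of_iIndepFun_gaussianReal {Ω ι : Type*} [MeasurableSpace Ω]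
    {μ : Measure Ω} [Fintype ι] {X : ι → Ω → ℝ} {v : ℝ≥0} (hX : ∀ i, AEMeasurable (X i) μ)
    (hind : iIndepFun X μ) (hlaw : ∀ i, μ.map (X i) = gaussianReal 0 v) (a : ι → ℝ) :
    ∫ ω, cexp ((∑ i, a i * X i ω : ℝ) * I) ∂μ = rexp (-(v * ∑ i, a i ^ 2) / 2) := by
  have hprod : ∀ ω, cexp ((∑ i, a i * X i ω : ℝ) * I) = ∏ i, cexp (a i * X i ω * I) := by
    intro ω
    rw [← Complex.exp_sum, ofReal_sum, Finset.sum_mul]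
    push_cast
    rfl
  have hfactor : ∀ i, ∫ ω, cexp (a i * X i ω * I) ∂μ = cexp (-(v * a i ^ 2 / 2)) := by
    intro i
    rw [← integral_map (f := fun y : ℝ ↦ cexp (a i * y * I)) (hX i) (by fun_prop), hlaw i,
      ← charFun_apply_real, charFun_gaussianReal]
    push_cast
    ring_nf
  simp_rw [hprod]
  rw [hind.integral_fun_prod_comp (f := fun i (y : ℝ) ↦ cexp (a i * y * I)) hX
    (fun i ↦ by fun_prop)]
  simp_rw [hfactor, ← Complex.exp_sum]
  push_cast
  rw [Finset.mul_sum, neg_div, Finset.sum_div, ← Finset.sum_neg_distrib]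

theorem integral_exp_neg_mul_sq_gaussianReal (v : ℝ≥0) {c : ℝ} (hc : 0 ≤ c) :
    ∫ y, rexp (-(c * y ^ 2) / 2) ∂gaussianReal 0 v = (√(1 + c * v))⁻¹ := by
  rcases eq_or_ne v 0 with rfl | hv
  · simp [gaussianReal_zero_var]
  have hv' : (0 : ℝ) < v := NNReal.coe_pos.2 (pos_iff_ne_zero.2 hv)
  have hdensity : ∀ y, gaussianPDFReal 0 v y • rexp (-(c * y ^ 2) / 2)
      = (√(2 * π * v))⁻¹ * rexp (-((1 + c * v) / (2 * v)) * y ^ 2) := by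
    intro y
    rw [gaussianPDFReal, smul_eq_mul, mul_assoc, ← Real.exp_add]
    congr 2
    field_simp
    ring
  rw [integral_gaussianReal_eq_integral_smul hv]
  simp_rw [hdensity]
  rw [integral_const_mul, integral_gaussian,
    show π / ((1 + c * v) / (2 * v)) = 2 * π * v / (1 + c * v) by field_simp,
    Real.sqrt_div (by positivity)]
  field_simp

theorem integral_exp_neg_mul_sum_sq_of_iIndepFun_gaussianReal {Ω ι : Type*} [MeasurableSpace Ω]
    {μ : Measure Ω} [Fintype ι] {X : ι → Ω → ℝ} {v : ℝ≥0} (hX : ∀ i, AEMeasurable (X i) μ)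
    (hind : iIndepFun X μ) (hlaw : ∀ i, μ.map (X i) = gaussianReal 0 v) {c : ℝ} (hc : 0 ≤ c) :
    ∫ ω, rexp (-(c * ∑ i, X i ω ^ 2) / 2) ∂μ = (√(1 + c * v))⁻¹ ^ Fintype.card ι := by
  have hprod : ∀ ω, rexp (-(c * ∑ i, X i ω ^ 2) / 2) = ∏ i, rexp (-(c * X i ω ^ 2) / 2) := by
    intro ω
    rw [← Real.exp_sum, Finset.mul_sum, neg_div, Finset.sum_div, ← Finset.sum_neg_distrib]
    simp only [neg_div]
  have hfactor : ∀ i, ∫ ω, rexp (-(c * X i ω ^ 2) / 2) ∂μ = (√(1 + c * v))⁻¹ := by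
    intro i
    rw [← integral_map (f := fun y ↦ rexp (-(c * y ^ 2) / 2)) (hX i) (by fun_prop), hlaw i,
      integral_exp_neg_mul_sq_gaussianReal v hc]
  simp_rw [hprod]
  rw [hind.integral_fun_prod_comp (f := fun _ y ↦ rexp (-(c * y ^ 2) / 2)) hX
    (fun _ ↦ by fun_prop)]
  simp_rw [hfactor]
  rw [Finset.prod_const, Finset.card_univ]

theorem integral_cexp_sum_mul_sum_mul_I_of_iIndepFun_gaussianReal {Ω ι κ : Type*}
    [MeasurableSpace Ω] {μ : Measure Ω} [Fintype ι] [Fintype κ] {M : Ω → ι → κ → ℝ} {v : ℝ≥0}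
    (hM : ∀ p : ι × κ, AEMeasurable (fun ω ↦ M ω p.1 p.2) μ)
    (hind : iIndepFun (fun (p : ι × κ) ω ↦ M ω p.1 p.2) μ)
    (hlaw : ∀ p : ι × κ, μ.map (fun ω ↦ M ω p.1 p.2) = gaussianReal 0 v)
    (w : ι → ℝ) (x : κ → ℝ) :
    ∫ ω, cexp ((∑ i, w i * ∑ j, M ω i j * x j : ℝ) * I) ∂μ
      = rexp (-(v * ((∑ i, w i ^ 2) * ∑ j, x j ^ 2)) / 2) := by
  have hlin : ∀ ω,
      ∑ i, w i * ∑ j, M ω i j * x j = ∑ p : ι × κ, w p.1 * x p.2 * M ω p.1 p.2 := by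
    intro ω
    simp only [Fintype.sum_prod_type, Finset.mul_sum]
    exact Finset.sum_congr rfl fun i _ ↦ Finset.sum_congr rfl fun j _ ↦ by ring
  have hcoef : ∑ p : ι × κ, (w p.1 * x p.2) ^ 2 = (∑ i, w i ^ 2) * ∑ j, x j ^ 2 := by
    simp only [Fintype.sum_prod_type, mul_pow, Finset.sum_mul_sum]
  simp_rw [hlin]
  rw [integral_cexp_sum_mul_I_of_iIndepFun_gaussianReal hM hind hlaw, hcoef]

theorem stmt1_general {Ω : Type*} [MeasurableSpace Ω] (μ : Measure Ω) [IsProbabilityMeasure μ]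
    (D : ℕ) (σ₁ σ₂ : ℝ)
    (x : Fin D → ℝ)
    (M : Ω → Fin 2 → Fin D → ℝ) (W : Ω → Fin 2 → ℝ)
    (hMmeas : Measurable M) (hWmeas : Measurable W)
    (hMindep : iIndepFun
      (fun (p : Fin 2 × Fin D) ω => M ω p.1 p.2) μ)
    (hMdist : ∀ p : Fin 2 × Fin D,
      Measure.map (fun ω => M ω p.1 p.2) μ = gaussianReal 0 (Real.toNNReal (σ₁ ^ 2)))
    (hWindep : iIndepFun (fun (i : Fin 2) ω => W ω i) μ)
    (hWdist : ∀ i : Fin 2,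
      Measure.map (fun ω => W ω i) μ = gaussianReal 0 (Real.toNNReal (σ₂ ^ 2)))
    (hMW : IndepFun M W μ) :
    ∀ q : ℝ,
      ∫ ω, Complex.exp (Complex.I * q * (∑ i, W ω i * ∑ j, M ω i j * x j)) ∂μ
        = 1 / (1 + (σ₁ * σ₂ * Real.sqrt (∑ j, x j ^ 2)) ^ 2 * q ^ 2) := by
  intro q
  have hv₁ : ((σ₁ ^ 2).toNNReal : ℝ) = σ₁ ^ 2 := Real.coe_toNNReal _ (sq_nonneg _)
  have hv₂ : ((σ₂ ^ 2).toNNReal : ℝ) = σ₂ ^ 2 := Real.coe_toNNReal _ (sq_nonneg _)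
  set H : (Fin 2 → ℝ) × (Fin 2 → Fin D → ℝ) → ℂ :=
    fun p ↦ cexp ((∑ i, q * p.1 i * ∑ j, p.2 i j * x j : ℝ) * I)
  have hH : StronglyMeasurable H := Measurable.stronglyMeasurable (by fun_prop)
  have hint : Integrable (fun ω ↦ H (W ω, M ω)) μ :=
    Integrable.of_bound (by fun_prop) 1 (ae_of_all _ fun ω ↦ (norm_exp_ofReal_mul_I _).le)
  have hquad : ∀ w : Fin 2 → ℝ,
      ((σ₁ ^ 2).toNNReal : ℝ) * ((∑ i, (q * w i) ^ 2) * ∑ j, x j ^ 2)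
      = σ₁ ^ 2 * q ^ 2 * (∑ j, x j ^ 2) * ∑ i, w i ^ 2 := by
    intro w
    simp only [hv₁, mul_pow, ← Finset.mul_sum]
    ring
  have hκ : (σ₁ * σ₂ * √(∑ j, x j ^ 2)) ^ 2 * q ^ 2
      = σ₁ ^ 2 * q ^ 2 * (∑ j, x j ^ 2) * σ₂ ^ 2 := by
    rw [mul_pow, mul_pow, Real.sq_sqrt (Finset.sum_nonneg fun j _ ↦ sq_nonneg (x j))]
    ring
  calc ∫ ω, cexp (I * q * ↑(∑ i, W ω i * ∑ j, M ω i j * x j)) ∂μ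
      = ∫ ω, H (W ω, M ω) ∂μ := by
        congr with ω
        simp only [H, mul_assoc, ← Finset.mul_sum]
        push_cast
        rw [mul_comm I]
    _ = ∫ ω, ∫ ω', H (W ω, M ω') ∂μ ∂μ :=
        hMW.symm.integral_comp_eq_integral_integral hWmeas.aemeasurable
          hMmeas.aemeasurable hH hint
    _ = ∫ ω, (rexp (-(σ₁ ^ 2 * q ^ 2 * (∑ j, x j ^ 2) * ∑ i, W ω i ^ 2) / 2) : ℂ) ∂μ := by
        simp only [H, integral_cexp_sum_mul_sum_mul_I_of_iIndepFun_gaussianReal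
          (fun p ↦ by fun_prop) hMindep hMdist, hquad]
    _ = 1 / (1 + (σ₁ * σ₂ * √(∑ j, x j ^ 2)) ^ 2 * q ^ 2) := by
        rw [integral_complex_ofReal, integral_exp_neg_mul_sum_sq_of_iIndepFun_gaussianReal
          (fun i ↦ by fun_prop) hWindep hWdist (by positivity), Fintype.card_fin, hv₂, inv_pow,
          Real.sq_sqrt (by positivity), ← hκ, one_div]
        push_cast
        rfl

/-- Shallow linear Gaussian network with hidden width 2: if the entries of `M ∈ ℝ^{2×D}` are
i.i.d. `N(0, σ₁²)`, the entries of the row vector `W ∈ ℝ^{1×2}` are i.i.d. `N(0, σ₂²)`,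
`W` is independent of `M`, and `x ≠ 0`, then the characteristic
function of `f = W M x` is `E[exp(i q f)] = 1/(1 + κ² q²)`, `κ = σ₁ σ₂ ‖x‖`. -/
theorem stmt1 {Ω : Type*} [MeasurableSpace Ω] (μ : Measure Ω) [IsProbabilityMeasure μ]
    (D : ℕ) (hD : 1 ≤ D) (σ₁ σ₂ : ℝ) (hσ₁ : 0 < σ₁) (hσ₂ : 0 < σ₂)
    (x : Fin D → ℝ) (hx : x ≠ 0)
    (M : Ω → Fin 2 → Fin D → ℝ) (W : Ω → Fin 2 → ℝ)
    (hMmeas : Measurable M) (hWmeas : Measurable W)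
    (hMindep : iIndepFun
      (fun (p : Fin 2 × Fin D) ω => M ω p.1 p.2) μ)
    (hMdist : ∀ p : Fin 2 × Fin D,
      Measure.map (fun ω => M ω p.1 p.2) μ = gaussianReal 0 (Real.toNNReal (σ₁ ^ 2)))
    (hWindep : iIndepFun (fun (i : Fin 2) ω => W ω i) μ)
    (hWdist : ∀ i : Fin 2,
      Measure.map (fun ω => W ω i) μ = gaussianReal 0 (Real.toNNReal (σ₂ ^ 2)))
    (hMW : IndepFun M W μ) :
    ∀ q : ℝ,
      ∫ ω, Complex.exp (Complex.I * q * (∑ i, W ω i * ∑ j, M ω i j * x j)) ∂μ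
        = 1 / (1 + (σ₁ * σ₂ * Real.sqrt (∑ j, x j ^ 2)) ^ 2 * q ^ 2) :=
  stmt1_general μ D σ₁ σ₂ x M W hMmeas hWmeas hMindep hMdist hWindep hWdist hMW
end

section
/- Let D ≥ 1 and x, y ∈ ℝ^D, and let ω ∈ ℝ^D be a random vector with distribution N(0, I_D). Then E[(cos(ω·x) − cos(ω·y))² + (sin(ω·x) − sin(ω·y))²] = 2 − 2 exp(−½ ‖x − y‖²), i.e., the expected squared distance between the trigonometric feature doublets equals 2 − 2 k_SE(x,y), where k_SE(x,y) = exp(−½ ‖x−y‖²) is the squared exponential kernel with unit hyperparameters. -/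
open MeasureTheory ProbabilityTheory Real Matrix

/-! The two feature doublets lie on the unit circle, so their squared distance is
`2 - 2 cos (ω ⬝ᵥ (x - y))`. The mean of `cos (ω ⬝ᵥ v)` is the real part of the characteristic
function of `N(0, I)` at `v`, which factorises over the independent coordinates into
`∏ i, exp (-(v i)² / 2)`. -/

lemma cos_sub_cos_sq_add_sin_sub_sin_sq (a b : ℝ) :
    (Real.cos a - Real.cos b) ^ 2 + (Real.sin a - Real.sin b) ^ 2 = 2 - 2 * Real.cos (a - b) := by
  rw [Real.cos_sub]
  nlinarith [Real.sin_sq_add_cos_sq a, Real.sin_sq_add_cos_sq b]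

open Complex in
lemma integral_cexp_dotProduct_mul_I_pi {ι : Type*} [Fintype ι] (μ : ι → Measure ℝ)
    [∀ i, SigmaFinite (μ i)] (v : ι → ℝ) :
    ∫ w, cexp ((w ⬝ᵥ v : ℝ) * I) ∂Measure.pi μ = ∏ i, charFun (μ i) (v i) := by
  simp_rw [charFun_apply_real, ← integral_fintype_prod_eq_prod, ← Complex.exp_sum, dotProduct,
    ofReal_sum, Finset.sum_mul, ofReal_mul, mul_comm (v _ : ℂ)]

lemma integral_cos_dotProduct_pi_gaussianReal {ι : Type*} [Fintype ι] (v : ι → ℝ) :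
    ∫ w, Real.cos (w ⬝ᵥ v) ∂(Measure.pi fun _ ↦ gaussianReal 0 1)
      = Real.exp (-(1 / 2) * ∑ i, v i ^ 2) := by
  have h_int : Integrable (fun w : ι → ℝ ↦ Complex.exp ((w ⬝ᵥ v : ℝ) * Complex.I))
      (Measure.pi fun _ ↦ gaussianReal 0 1) :=
    .of_bound (by fun_prop) 1 (.of_forall fun w ↦ by simp [Complex.norm_exp_ofReal_mul_I])
  have h_charFun (t : ℝ) :
      charFun (gaussianReal 0 1) t = (Real.exp (-(1 / 2) * t ^ 2) : ℂ) := by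
    rw [charFun_gaussianReal, Complex.ofReal_exp]
    push_cast
    ring_nf
  simp_rw [← Complex.exp_ofReal_mul_I_re]
  refine (integral_re h_int).trans ?_
  simp_rw [integral_cexp_dotProduct_mul_I_pi, h_charFun, ← Complex.ofReal_prod, ← Real.exp_sum,
    ← Finset.mul_sum]
  exact Complex.ofReal_re _

theorem stmt11_general {Ω : Type*} [MeasurableSpace Ω] (μ : Measure Ω) [IsProbabilityMeasure μ]
    (D : ℕ) (x y : Fin D → ℝ)
    (W : Ω → Fin D → ℝ)
    (hW : Measure.map W μ = Measure.pi (fun _ : Fin D => gaussianReal 0 1)) :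
    ∫ ω, ((Real.cos (W ω ⬝ᵥ x) - Real.cos (W ω ⬝ᵥ y)) ^ 2
        + (Real.sin (W ω ⬝ᵥ x) - Real.sin (W ω ⬝ᵥ y)) ^ 2) ∂μ
      = 2 - 2 * Real.exp (-(1 / 2) * ∑ j, (x j - y j) ^ 2) := by
  have hW_meas : AEMeasurable W μ := aemeasurable_of_map_neZero (by rw [hW]; infer_instance)
  have h_int : Integrable (fun w : Fin D → ℝ ↦ Real.cos (w ⬝ᵥ (x - y)))
      (Measure.pi fun _ ↦ gaussianReal 0 1) :=
    .of_bound (by fun_prop) 1 (.of_forall fun w ↦ by simpa using Real.abs_cos_le_one _)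
  calc _ = ∫ ω, 2 - 2 * Real.cos (W ω ⬝ᵥ (x - y)) ∂μ := by
        simp_rw [dotProduct_sub, cos_sub_cos_sq_add_sin_sub_sin_sq]
    _ = ∫ w, 2 - 2 * Real.cos (w ⬝ᵥ (x - y)) ∂(Measure.pi fun _ ↦ gaussianReal 0 1) := by
        rw [← hW, integral_map hW_meas (by fun_prop)]
    _ = _ := by
        rw [integral_sub (integrable_const 2) (h_int.const_mul 2), integral_const_mul,
          integral_cos_dotProduct_pi_gaussianReal]
        simp

/-- For `ω ~ N(0, I_D)` (i.i.d. standard Gaussian entries) and `x, y ∈ ℝ^D`,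
`E[(cos(ω·x) − cos(ω·y))² + (sin(ω·x) − sin(ω·y))²] = 2 − 2 exp(−½ ‖x−y‖²)`. -/
theorem stmt11 {Ω : Type*} [MeasurableSpace Ω] (μ : Measure Ω) [IsProbabilityMeasure μ]
    (D : ℕ) (hD : 1 ≤ D) (x y : Fin D → ℝ)
    (W : Ω → Fin D → ℝ)
    (hW : Measure.map W μ = Measure.pi (fun _ : Fin D => gaussianReal 0 1)) :
    ∫ ω, ((Real.cos (W ω ⬝ᵥ x) - Real.cos (W ω ⬝ᵥ y)) ^ 2
        + (Real.sin (W ω ⬝ᵥ x) - Real.sin (W ω ⬝ᵥ y)) ^ 2) ∂μ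
      = 2 - 2 * Real.exp (-(1 / 2) * ∑ j, (x j - y j) ^ 2) :=
  stmt11_general μ D x y W hW
end

section
/- Let H ≥ 1 and let k ∈ [−1, 1]. Let (X₁, Y₁), …, (X_H, Y_H) be i.i.d. pairs, each jointly Gaussian with mean zero, Var(X_i) = Var(Y_i) = 1, and Cov(X_i, Y_i) = k. Then E[exp(−½ Σ_{i=1}^H (X_i − Y_i)²)] = (1 + 2(1 − k))^{−H/2}. In particular, taking k = k_SE(x,y) = exp(−½‖x−y‖²), the limiting covariance of the two-layer deep trigonometric network with i.i.d. standard Gaussian weights equals the two-layer deep Gaussian process kernel k_DGP(x,y) = (1 + 2(1 − k_SE(x,y)))^{−H/2}. -/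
/-!
Each difference `Xᵢ - Yᵢ` is centered Gaussian with variance `2 - 2k`, and the differences are
independent, so the expectation factorizes into `H` copies of the one-dimensional Gaussian
integral `E[exp(-t Z²)] = (1 + 2tv)^{-1/2}` for `Z ~ 𝒩(0, v)`, taken at `t = 1/2`.
-/

open MeasureTheory ProbabilityTheory Real
open scoped NNReal

lemma integral_exp_neg_mul_sq_gaussianReal_s14 {t : ℝ} {v : ℝ≥0} (ht : 0 < 1 + 2 * t * v) :
    ∫ x, exp (-t * x ^ 2) ∂gaussianReal 0 v = (1 + 2 * t * v) ^ (-(1 / 2) : ℝ) := by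
  rcases eq_or_ne v 0 with rfl | hv
  · simp
  have hv_pos : (0 : ℝ) < v := by positivity
  have hb : 0 < (1 + 2 * t * v) / (2 * v) := by positivity
  have hdensity : ∀ x : ℝ, gaussianPDFReal 0 v x • exp (-t * x ^ 2)
      = (√(2 * π * v))⁻¹ * exp (-((1 + 2 * t * v) / (2 * v)) * x ^ 2) := by
    intro x
    rw [gaussianPDFReal_def, smul_eq_mul, mul_assoc, ← exp_add]
    congr 2
    field_simp
    ring
  have hconst : (2 * π * v)⁻¹ * (π / ((1 + 2 * t * v) / (2 * v))) = (1 + 2 * t * v)⁻¹ := by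
    field_simp
  rw [integral_gaussianReal_eq_integral_smul hv]
  simp_rw [hdensity]
  rw [integral_const_mul, integral_gaussian, ← sqrt_inv, ← sqrt_mul (by positivity), hconst,
    sqrt_eq_rpow, ← rpow_neg_one, ← rpow_mul ht.le]
  norm_num

lemma ProbabilityTheory.iIndepFun.integral_fun_prod_comp_eq_pow {Ω ι β : Type*}
    [MeasurableSpace Ω] [MeasurableSpace β] [Fintype ι] {μ : Measure Ω} {ν : Measure β}
    {Z : ι → Ω → β}
    (hZ : iIndepFun Z μ) (hZm : ∀ i, AEMeasurable (Z i) μ) (hlaw : ∀ i, μ.map (Z i) = ν)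
    {f : β → ℝ} (hf : AEStronglyMeasurable f ν) :
    ∫ ω, ∏ i, f (Z i ω) ∂μ = (∫ x, f x ∂ν) ^ Fintype.card ι := by
  rw [hZ.integral_fun_prod_comp hZm fun i ↦ hlaw i ▸ hf, ← Finset.card_univ,
    ← Finset.prod_const]
  refine Finset.prod_congr rfl fun i _ ↦ ?_
  rw [← hlaw i, integral_map (hZm i) (hlaw i ▸ hf)]

theorem stmt14_general {Ω : Type*} [MeasurableSpace Ω] (μ : Measure Ω) [IsProbabilityMeasure μ]
    (H : ℕ) (k : ℝ) (hk : k ∈ Set.Icc (-1 : ℝ) 1)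
    (X Y : Fin H → Ω → ℝ)
    (hindep : iIndepFun
      (fun i ω => (X i ω, Y i ω)) μ)
    (hgauss : ∀ i, ∀ a b : ℝ,
      Measure.map (fun ω => a * X i ω + b * Y i ω) μ
        = gaussianReal 0 (Real.toNNReal (a ^ 2 + b ^ 2 + 2 * a * b * k))) :
    ∫ ω, Real.exp (-(1 / 2) * ∑ i, (X i ω - Y i ω) ^ 2) ∂μ
      = (1 + 2 * (1 - k)) ^ (-(H : ℝ) / 2) := by
  have hk1 : k ≤ 1 := hk.2
  set Z : Fin H → Ω → ℝ := fun i ω ↦ X i ω - Y i ω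
  have hv : ((2 - 2 * k).toNNReal : ℝ) = 2 - 2 * k := coe_toNNReal _ (by linarith)
  have hlaw : ∀ i, μ.map (Z i) = gaussianReal 0 (2 - 2 * k).toNNReal := fun i ↦ by
    rw [show Z i = fun ω ↦ 1 * X i ω + -1 * Y i ω by ext; ring, hgauss]
    congr 2
    ring
  have hZm : ∀ i, AEMeasurable (Z i) μ := fun i ↦
    aemeasurable_of_map_neZero (by rw [hlaw i]; infer_instance)
  have hZ : iIndepFun Z μ :=
    hindep.comp (fun _ p ↦ p.1 - p.2) fun _ ↦ measurable_fst.sub measurable_snd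
  have hintegrand : ∀ ω, exp (-(1 / 2) * ∑ i, (X i ω - Y i ω) ^ 2)
      = ∏ i, exp (-(1 / 2) * Z i ω ^ 2) := fun ω ↦ by rw [Finset.mul_sum, exp_sum]
  simp_rw [hintegrand]
  rw [hZ.integral_fun_prod_comp_eq_pow hZm hlaw (f := fun x ↦ exp (-(1 / 2) * x ^ 2))
      (by fun_prop), integral_exp_neg_mul_sq_gaussianReal_s14 (by rw [hv]; linarith), hv,
    Fintype.card_fin, ← rpow_natCast, ← rpow_mul (by linarith)]
  ring_nf

/-- For i.i.d. centered jointly Gaussian pairs `(Xᵢ, Yᵢ)` with unit variances and correlation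
`k ∈ [−1,1]` (joint Gaussianity encoded by the linear-functional characterization),
`E[exp(−½ Σᵢ (Xᵢ − Yᵢ)²)] = (1 + 2(1 − k))^{−H/2}`: the two-layer deep GP kernel. -/
theorem stmt14 {Ω : Type*} [MeasurableSpace Ω] (μ : Measure Ω) [IsProbabilityMeasure μ]
    (H : ℕ) (hH : 1 ≤ H) (k : ℝ) (hk : k ∈ Set.Icc (-1 : ℝ) 1)
    (X Y : Fin H → Ω → ℝ)
    (hindep : iIndepFun
      (fun i ω => (X i ω, Y i ω)) μ)
    (hgauss : ∀ i, ∀ a b : ℝ,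
      Measure.map (fun ω => a * X i ω + b * Y i ω) μ
        = gaussianReal 0 (Real.toNNReal (a ^ 2 + b ^ 2 + 2 * a * b * k))) :
    ∫ ω, Real.exp (-(1 / 2) * ∑ i, (X i ω - Y i ω) ^ 2) ∂μ
      = (1 + 2 * (1 - k)) ^ (-(H : ℝ) / 2) :=
  stmt14_general μ H k hk X Y hindep hgauss
end

section
/- Let ω and Z be independent real Gaussian random variables where ω has the finite mixture distribution Σ_a π_a N(μ_a, σ_a²) (π_a ≥ 0 summing to 1) and Z ~ N(m, δ²). Then E[cos(ω Z)] = Σ_a π_a (1 + σ_a² δ²)^{−1/2} · exp(−(σ_a² m² + δ² μ_a²) / (2(1 + σ_a² δ²))) · cos(μ_a m / (1 + σ_a² δ²)). -/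
open MeasureTheory ProbabilityTheory Real Complex
open scoped ENNReal NNReal

/-!
Conditionally on `W = x`, the expectation of `cos (x Z)` is the real part of the characteristic
function of `Z`, namely `exp (-δ² x² / 2) cos (m x)`. Integrating this against each mixture
component `N(μ_a, σ_a²)` is the real part of the Gaussian integral of `exp (-δ² x² / 2 + i m x)`,
which is computed by completing the square.
-/

theorem ProbabilityTheory.IndepFun.integral_comp_eq_integral_prod {Ω β γ E : Type*}
    {mΩ : MeasurableSpace Ω} {mβ : MeasurableSpace β} {mγ : MeasurableSpace γ}
    [NormedAddCommGroup E] [NormedSpace ℝ E]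
    {μ : Measure Ω} [IsFiniteMeasure μ] {X : Ω → β} {Y : Ω → γ} (hXY : IndepFun X Y μ)
    (hX : AEMeasurable X μ) (hY : AEMeasurable Y μ) {f : β × γ → E}
    (hf : AEStronglyMeasurable f ((μ.map X).prod (μ.map Y))) :
    ∫ ω, f (X ω, Y ω) ∂μ = ∫ p, f p ∂(μ.map X).prod (μ.map Y) := by
  rw [← hXY.map_prod_eq_prod_map_map hX hY] at hf ⊢
  exact (integral_map (hX.prodMk hY) hf).symm

section Mixture

variable {X ι : Type*} {mX : MeasurableSpace X} {s : Finset ι} {w : ι → ℝ≥0} {P : ι → Measure X}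

lemma isProbabilityMeasure_finsetSum_smul (hw : ∑ i ∈ s, w i = 1)
    [∀ i, IsProbabilityMeasure (P i)] : IsProbabilityMeasure (∑ i ∈ s, (w i : ℝ≥0∞) • P i) := by
  constructor
  simp [Measure.finsetSum_apply, ← ENNReal.ofNNReal_finsetSum, hw]

lemma integral_finsetSum_smul_measure {E : Type*} [NormedAddCommGroup E] [NormedSpace ℝ E]
    {f : X → E} (hf : ∀ i ∈ s, Integrable f (P i)) :
    ∫ x, f x ∂(∑ i ∈ s, (w i : ℝ≥0∞) • P i) = ∑ i ∈ s, (w i : ℝ) • ∫ x, f x ∂P i := by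
  rw [integral_finsetSum_measure fun i hi ↦ (hf i hi).smul_measure ENNReal.coe_ne_top]
  simp_rw [integral_smul_measure, ENNReal.coe_toReal]

end Mixture

lemma re_cexp_ofReal_add_ofReal_mul_I (a b : ℝ) :
    (cexp (a + b * I)).re = rexp a * Real.cos b := by
  rw [Complex.exp_add, ← ofReal_exp, re_ofReal_mul, exp_ofReal_mul_I_re]

lemma re_charFun_eq_integral_cos {ρ : Measure ℝ} [IsFiniteMeasure ρ] (t : ℝ) :
    (charFun ρ t).re = ∫ x, Real.cos (t * x) ∂ρ := by
  have hint : Integrable (fun x : ℝ ↦ cexp ((t * x : ℝ) * I)) ρ :=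
    Integrable.of_bound (by fun_prop) 1 (ae_of_all _ fun x ↦ (norm_exp_ofReal_mul_I _).le)
  rw [charFun_apply_real]
  simp_rw [← ofReal_mul, ← exp_ofReal_mul_I_re]
  exact (integral_re hint).symm

lemma integrable_re_charFun {ν ρ : Measure ℝ} [IsFiniteMeasure ν] [IsFiniteMeasure ρ] :
    Integrable (fun t ↦ (charFun ρ t).re) ν :=
  Integrable.of_bound (Complex.measurable_re.comp measurable_charFun).aestronglyMeasurable
    (ρ.real Set.univ) (ae_of_all _ fun t ↦
      ((Real.norm_eq_abs _).trans_le (abs_re_le_norm _)).trans (norm_charFun_le t))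

lemma integral_cos_mul_prod_eq_integral_re_charFun {ν ρ : Measure ℝ} [IsFiniteMeasure ν]
    [IsFiniteMeasure ρ] :
    ∫ p : ℝ × ℝ, Real.cos (p.1 * p.2) ∂ν.prod ρ = ∫ x, (charFun ρ x).re ∂ν := by
  rw [integral_prod _ (Integrable.of_bound (by fun_prop) 1
    (ae_of_all _ fun p ↦ by simpa using Real.abs_cos_le_one _))]
  simp_rw [re_charFun_eq_integral_cos]

theorem integral_cexp_quadratic_gaussianReal (μ : ℝ) (v : ℝ≥0) {t : ℝ} (ht : 0 ≤ t) (c : ℂ) :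
    ∫ x, cexp (-(t / 2) * x ^ 2 + c * x) ∂gaussianReal μ v
      = ((1 + v * t) ^ (-(1 / 2) : ℝ) : ℝ)
        * cexp ((-(t / 2) * μ ^ 2 + c * μ + v * c ^ 2 / 2) / (1 + v * t)) := by
  rcases eq_or_ne v 0 with rfl | hv
  · simp [gaussianReal_zero_var]
  have hv' : (0 : ℝ) < v := NNReal.coe_pos.mpr (pos_iff_ne_zero.mpr hv)
  have hK : (0 : ℝ) < 1 + v * t := by positivity
  have hvC : (v : ℂ) ≠ 0 := mod_cast hv'.ne'
  have hKC : (1 + v * t : ℂ) ≠ 0 := mod_cast hK.ne'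
  set b : ℝ := (1 + v * t) / (2 * v) with hb
  have hB : (-b : ℂ).re < 0 := by
    rw [← ofReal_neg, ofReal_re, neg_lt_zero]; positivity
  calc ∫ x, cexp (-(t / 2) * x ^ 2 + c * x) ∂gaussianReal μ v
    _ = (√(2 * π * v))⁻¹ * ∫ x : ℝ, cexp (-b * x ^ 2 + (c + μ / v) * x + -μ ^ 2 / (2 * v)) := by
      simp_rw [integral_gaussianReal_eq_integral_smul hv, Complex.real_smul, gaussianPDFReal]
      push_cast
      simp_rw [mul_assoc, integral_const_mul, ← Complex.exp_add]
      congr with x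
      congr 1
      rw [hb]
      push_cast
      field_simp
      ring
    _ = (√(2 * π * v))⁻¹ * (π / b) ^ (1 / 2 : ℂ)
          * cexp (-μ ^ 2 / (2 * v) - (c + μ / v) ^ 2 / (4 * -b)) := by
      rw [integral_cexp_quadratic hB, ← mul_assoc, neg_neg]
    _ = _ := by
      congr 1
      · have hπb : π / b = 2 * π * v / (1 + v * t) := by rw [hb]; field_simp
        rw [← ofReal_div, show (1 / 2 : ℂ) = ((1 / 2 : ℝ) : ℂ) by norm_num,
          ← ofReal_cpow (by positivity), ← ofReal_mul, hπb,
          Real.div_rpow (by positivity) hK.le, Real.sqrt_eq_rpow, Real.rpow_neg hK.le]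
        have : (2 * π * v) ^ (1 / 2 : ℝ) ≠ 0 := by positivity
        field_simp
      · congr 1
        rw [hb]
        push_cast
        field_simp
        ring

lemma re_charFun_gaussianReal (μ : ℝ) (v : ℝ≥0) (t : ℝ) :
    (charFun (gaussianReal μ v) t).re = rexp (-(v * t ^ 2 / 2)) * Real.cos (t * μ) := by
  rw [charFun_gaussianReal, ← re_cexp_ofReal_add_ofReal_mul_I]
  push_cast
  ring_nf

theorem integral_exp_mul_cos_gaussianReal (μ : ℝ) (v : ℝ≥0) {t : ℝ} (ht : 0 ≤ t) (c : ℝ) :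
    ∫ x, rexp (-(t * x ^ 2 / 2)) * Real.cos (x * c) ∂gaussianReal μ v
      = (1 + v * t) ^ (-(1 / 2) : ℝ) * rexp (-(v * c ^ 2 + t * μ ^ 2) / (2 * (1 + v * t)))
        * Real.cos (μ * c / (1 + v * t)) := by
  have hK : (1 + v * t : ℂ) ≠ 0 := mod_cast (show (0 : ℝ) < 1 + v * t by positivity).ne'
  have hexp (x : ℝ) : cexp (-(t / 2) * x ^ 2 + (c * I) * x)
      = cexp ((-(t * x ^ 2 / 2) : ℝ) + (x * c : ℝ) * I) := by
    push_cast; ring_nf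
  have hint : Integrable (fun x : ℝ ↦ cexp (-(t / 2) * x ^ 2 + (c * I) * x)) (gaussianReal μ v) :=
    Integrable.of_bound (by fun_prop) 1 (ae_of_all _ fun x ↦ by
      rw [hexp, norm_exp, add_re, ofReal_re, re_ofReal_mul, I_re, mul_zero, add_zero,
        Real.exp_le_one_iff, neg_nonpos]
      positivity)
  have hexponent : (-(t / 2) * μ ^ 2 + c * I * μ + v * (c * I) ^ 2 / 2) / (1 + v * t)
      = ((-(v * c ^ 2 + t * μ ^ 2) / (2 * (1 + v * t)) : ℝ) : ℂ)
        + ((μ * c / (1 + v * t) : ℝ) : ℂ) * I := by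
    push_cast
    field_simp
    ring_nf
    rw [I_sq]
    ring
  simp_rw [← re_cexp_ofReal_add_ofReal_mul_I, ← hexp]
  refine (integral_re hint).trans ?_
  rw [RCLike.re_to_complex, integral_cexp_quadratic_gaussianReal μ v ht, hexponent, re_ofReal_mul,
    re_cexp_ofReal_add_ofReal_mul_I, mul_assoc]

/-- For independent real random variables `ω` with Gaussian mixture distribution
`Σ_a π_a N(μ_a, σ_a²)` and `Z ~ N(m, δ²)`,
`E[cos(ω Z)] = Σ_a π_a (1+σ_a²δ²)^{−1/2} exp(−(σ_a² m² + δ² μ_a²)/(2(1+σ_a²δ²)))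
cos(μ_a m/(1+σ_a²δ²))`. -/
theorem stmt16 {Ω : Type*} [MeasurableSpace Ω] (μ : Measure Ω) [IsProbabilityMeasure μ]
    {α : Type*} [Fintype α] (π' : α → ℝ≥0) (hπ : ∑ a, π' a = 1)
    (μm s : α → ℝ) (m δ : ℝ)
    (W Z : Ω → ℝ)
    (hW : Measure.map W μ
      = ∑ a, (π' a : ℝ≥0∞) • gaussianReal (μm a) (Real.toNNReal (s a ^ 2)))
    (hZ : Measure.map Z μ = gaussianReal m (Real.toNNReal (δ ^ 2)))
    (hindep : IndepFun W Z μ) :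
    ∫ ω, Real.cos (W ω * Z ω) ∂μ
      = ∑ a, (π' a : ℝ) * (1 + s a ^ 2 * δ ^ 2) ^ (-(1 / 2) : ℝ)
          * Real.exp (-(s a ^ 2 * m ^ 2 + δ ^ 2 * μm a ^ 2) / (2 * (1 + s a ^ 2 * δ ^ 2)))
          * Real.cos (μm a * m / (1 + s a ^ 2 * δ ^ 2)) := by
  have := isProbabilityMeasure_finsetSum_smul hπ
    (P := fun a ↦ gaussianReal (μm a) (s a ^ 2).toNNReal)
  have hWm : AEMeasurable W μ := aemeasurable_of_map_neZero (by rw [hW]; infer_instance)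
  have hZm : AEMeasurable Z μ := aemeasurable_of_map_neZero (by rw [hZ]; infer_instance)
  rw [hindep.integral_comp_eq_integral_prod hWm hZm (f := fun p ↦ Real.cos (p.1 * p.2))
      (by fun_prop), hW, hZ, integral_cos_mul_prod_eq_integral_re_charFun,
    integral_finsetSum_smul_measure fun a _ ↦ integrable_re_charFun]
  refine Finset.sum_congr rfl fun a _ ↦ ?_
  simp_rw [re_charFun_gaussianReal, Real.coe_toNNReal _ (sq_nonneg _)]
  rw [integral_exp_mul_cos_gaussianReal _ _ (sq_nonneg δ), Real.coe_toNNReal _ (sq_nonneg _),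
    smul_eq_mul, mul_assoc, mul_assoc, mul_assoc]
end
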